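/- arXiv:1311.2707 — 6 statements merged into one kernel-verified Lean document; each statement's English description precedes it below -/
import Mathlib

section
/- If the empirical joint distribution factorizes, i.e., n_{ij} = n_{i·}·n_{·j}/n for all i,j, then the functional chi-square statistic χ²(f:X→Y) equals zero. -/
open Finset

noncomputable def funChisq {r s : ℕ} (N : Fin r → Fin s → ℝ) : ℝ :=
  (∑ i, if (∑ j', N i j') = 0 then 0 else
    ∑ j, (N i j - (∑ j', N i j') / s) ^ 2 / ((∑ j', N i j') / s))
  - ∑ j, ((∑ i, N i j) - (∑ i, ∑ j', N i j') / s) ^ 2 / ((∑ i, ∑ j', N i j') / s)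

theorem stmt0 {r s : ℕ} (N : Fin r → Fin s → ℝ)
    (hnn : ∀ i j, 0 ≤ N i j)
    (hn : 0 < ∑ i, ∑ j, N i j)
    (hfact : ∀ i j, N i j = (∑ j', N i j') * (∑ i', N i' j) / (∑ i, ∑ j, N i j)) :
    funChisq N = 0 := by
  set n : ℝ := ∑ i, ∑ j, N i j with hn_def
  have hne : n ≠ 0 := ne_of_gt hn
  set a : Fin r → ℝ := fun i => ∑ j, N i j with ha
  set c : Fin s → ℝ := fun j => ∑ i, N i j with hc
  have hsum_a : ∑ i, a i = n := rfl
  have hsum_c : ∑ j, c j = n := by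
    rw [hn_def, Finset.sum_comm]
  have hrow : ∀ i, (if a i = 0 then (0:ℝ) else
      ∑ j, (N i j - a i / s) ^ 2 / (a i / s))
      = (a i / n) * ∑ j, (c j - n / s) ^ 2 / (n / s) := by
    intro i
    by_cases h0 : a i = 0
    · simp [h0]
    · rw [if_neg h0, Finset.mul_sum]
      refine Finset.sum_congr rfl fun j _ => ?_
      have hNij : N i j = a i * c j / n := hfact i j
      rw [hNij]
      field_simp
  have key : funChisq N =
      (∑ i, (a i / n) * ∑ j, (c j - n / s) ^ 2 / (n / s))
      - ∑ j, (c j - n / s) ^ 2 / (n / s) := by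
    unfold funChisq
    congr 1
    exact Finset.sum_congr rfl fun i _ => hrow i
  rw [key, ← Finset.sum_mul, ← Finset.sum_div, hsum_a, div_self hne, one_mul, sub_self]
end

section
/- If Y is a constant function of X in the sense that there exists a column j₀ with n_{ij₀} = n_{i·} for all i (all mass in one column), then the functional chi-square statistic χ²(f:X→Y) equals zero. -/
open Finset

theorem stmt1 {r s : ℕ} (N : Fin r → Fin s → ℝ)
    (hnn : ∀ i j, 0 ≤ N i j)
    (hn : 0 < ∑ i, ∑ j, N i j)
    (hconst : ∃ j₀ : Fin s, ∀ i, N i j₀ = ∑ j', N i j') :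
    funChisq N = 0 := by
  obtain ⟨j₀, hj₀⟩ := hconst
  have hs : (0:ℝ) < s := by
    have := j₀.pos
    exact_mod_cast this
  have hzero : ∀ i, ∀ j, j ≠ j₀ → N i j = 0 := by
    intro i j hj
    have hsplit : ∑ j', N i j' = N i j₀ + ∑ j' ∈ univ.erase j₀, N i j' := by
      rw [Finset.add_sum_erase _ _ (mem_univ j₀)]
    have h0 : ∑ j' ∈ univ.erase j₀, N i j' = 0 := by
      have := hj₀ i
      linarith [hsplit]
    have := (Finset.sum_eq_zero_iff_of_nonneg (fun j' _ => hnn i j')).mp h0 j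
      (Finset.mem_erase.mpr ⟨hj, mem_univ j⟩)
    exact this
  have aux : ∀ (v : Fin s → ℝ) (t : ℝ), t ≠ 0 → v j₀ = t → (∀ j, j ≠ j₀ → v j = 0) →
      ∑ j, (v j - t / s) ^ 2 / (t / s) = t * (s - 1) := by
    intro v t ht hvj hv0
    rw [← Finset.add_sum_erase _ _ (mem_univ j₀), hvj]
    have hterm : ∀ j ∈ univ.erase j₀, (v j - t / s) ^ 2 / (t / s) = t / s := by
      intro j hj
      rw [hv0 j (Finset.mem_erase.mp hj).1]
      field_simp
      ring
    rw [Finset.sum_congr rfl hterm, Finset.sum_const, Finset.card_erase_of_mem (mem_univ j₀),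
      Finset.card_univ, Fintype.card_fin]
    have hs1 : 1 ≤ s := j₀.pos
    have : ((s - 1 : ℕ) : ℝ) = (s : ℝ) - 1 := by
      push_cast [Nat.cast_sub hs1]; ring
    rw [nsmul_eq_mul, this]
    field_simp
    ring
  have hne : (∑ i, ∑ j, N i j) ≠ 0 := ne_of_gt hn
  unfold funChisq
  have hrow : ∀ i, (if (∑ j', N i j') = 0 then (0:ℝ) else
      ∑ j, (N i j - (∑ j', N i j') / s) ^ 2 / ((∑ j', N i j') / s)) =
      (∑ j', N i j') * (s - 1) := by
    intro i
    by_cases h : (∑ j', N i j') = 0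
    · rw [if_pos h, h]; ring
    · rw [if_neg h]
      exact aux (N i) _ h (hj₀ i) (fun j hj => hzero i j hj)
  rw [Finset.sum_congr rfl (fun i _ => hrow i)]
  have hcol : ∑ j, ((∑ i, N i j) - (∑ i, ∑ j', N i j') / s) ^ 2 / ((∑ i, ∑ j', N i j') / s) =
      (∑ i, ∑ j', N i j') * (s - 1) := by
    apply aux
    · exact hne
    · rw [Finset.sum_congr rfl (fun i _ => hj₀ i)]
    · intro j hj
      exact Finset.sum_eq_zero (fun i _ => hzero i j hj)
  rw [hcol, ← Finset.sum_mul]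
  ring
end

section
/- For a row i of a contingency table with row sum n_{i·} > 0, the row chi-square χ²(Y|X=i) = Σ_{j=1}^s (n_{ij} − n_{i·}/s)²/(n_{i·}/s) satisfies χ²(Y|X=i) ≤ n_{i·}(s−1), with equality if and only if exactly one entry n_{ij} equals n_{i·} and all others are zero. -/
open Finset

theorem stmt5 {s : ℕ} (hs : 1 ≤ s) (x : Fin s → ℝ) (t : ℝ)
    (hnn : ∀ j, 0 ≤ x j) (hsum : ∑ j, x j = t) (ht : 0 < t) :
    (∑ j, (x j - t / s) ^ 2 / (t / s) ≤ t * (s - 1 : ℝ)) ∧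
    (∑ j, (x j - t / s) ^ 2 / (t / s) = t * (s - 1 : ℝ) ↔
      ∃ m : Fin s, x m = t ∧ ∀ j ≠ m, x j = 0) := by
  have hs0 : (0:ℝ) < s := by exact_mod_cast Nat.lt_of_lt_of_le Nat.zero_lt_one hs
  have hsne : (s:ℝ) ≠ 0 := ne_of_gt hs0
  have htne : t ≠ 0 := ne_of_gt ht
  have hterm : ∀ j : Fin s, (x j - t / s) ^ 2 / (t / s)
      = (s / t) * (x j) ^ 2 - 2 * x j + t / s := by
    intro j; field_simp; ring
  have hrw : ∑ j, (x j - t / s) ^ 2 / (t / s)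
      = (s / t) * (∑ j, (x j) ^ 2) - t := by
    simp only [hterm]
    rw [Finset.sum_add_distrib, Finset.sum_sub_distrib, ← Finset.mul_sum,
      ← Finset.mul_sum, hsum, Finset.sum_const, Finset.card_univ, Fintype.card_fin,
      nsmul_eq_mul]
    field_simp
    ring
  -- each x j ≤ t
  have hle : ∀ j, x j ≤ t := by
    intro j
    rw [← hsum]
    exact Finset.single_le_sum (fun i _ => hnn i) (Finset.mem_univ j)
  have hS2le : ∑ j, (x j) ^ 2 ≤ t ^ 2 := by
    calc ∑ j, (x j) ^ 2 ≤ ∑ j, t * x j := by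
          refine Finset.sum_le_sum fun j _ => ?_
          have := mul_le_mul_of_nonneg_right (hle j) (hnn j)
          nlinarith [this]
      _ = t ^ 2 := by rw [← Finset.mul_sum, hsum]; ring
  constructor
  · rw [hrw]
    have : (s / t) * (∑ j, (x j) ^ 2) ≤ (s / t) * t ^ 2 :=
      mul_le_mul_of_nonneg_left hS2le (by positivity)
    have h2 : (s / t) * t ^ 2 = s * t := by field_simp
    nlinarith
  · rw [hrw]
    constructor
    · intro h
      have hS2 : ∑ j, (x j) ^ 2 = t ^ 2 := by
        field_simp at h
        nlinarith
      -- each x_j ∈ {0, t}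
      have hzero : ∑ j, (t * x j - (x j) ^ 2) = 0 := by
        rw [Finset.sum_sub_distrib, ← Finset.mul_sum, hsum, hS2]; ring
      have heach : ∀ j ∈ Finset.univ, t * x j - (x j) ^ 2 = 0 := by
        refine (Finset.sum_eq_zero_iff_of_nonneg fun j _ => ?_).mp hzero
        nlinarith [mul_le_mul_of_nonneg_right (hle j) (hnn j)]
      have hdichot : ∀ j, x j = 0 ∨ x j = t := by
        intro j
        have := heach j (Finset.mem_univ j)
        have : x j * (t - x j) = 0 := by nlinarith
        rcases mul_eq_zero.mp this with h | h
        · exact Or.inl h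
        · exact Or.inr (by linarith)
      -- there exists m with x m ≠ 0
      have : ∃ m, x m ≠ 0 := by
        by_contra hc
        push_neg at hc
        have : ∑ j, x j = 0 := Finset.sum_eq_zero fun j _ => hc j
        rw [hsum] at this
        exact htne this
      obtain ⟨m, hm⟩ := this
      have hxm : x m = t := (hdichot m).resolve_left hm
      refine ⟨m, hxm, ?_⟩
      have hrest : ∑ j ∈ Finset.univ.erase m, x j = 0 := by
        have := Finset.add_sum_erase Finset.univ x (Finset.mem_univ m)
        rw [hsum, hxm] at this
        linarith
      intro j hj
      have := (Finset.sum_eq_zero_iff_of_nonneg fun i _ => hnn i).mp hrest j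
        (Finset.mem_erase.mpr ⟨hj, Finset.mem_univ j⟩)
      exact this
    · rintro ⟨m, hm, hrest⟩
      have hS2 : ∑ j, (x j) ^ 2 = t ^ 2 := by
        rw [Finset.sum_eq_single m (fun j _ hj => by rw [hrest j hj]; ring)
          (fun h => absurd (Finset.mem_univ m) h), hm]
      rw [hS2]
      field_simp
end

section
/- For any r×s contingency table with total count n > 0 and column marginal probabilities q_j = n_{·j}/n, the functional chi-square statistic satisfies χ²(f:X→Y) ≤ n·s·(1 − Σ_{j=1}^s q_j²). -/
open Finset

lemma expand_chisq {s : ℕ} (a : Fin s → ℝ) (c : ℝ) (hc : c ≠ 0) :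
    ∑ j, (a j - c) ^ 2 / c = (∑ j, (a j) ^ 2) / c - 2 * (∑ j, a j) + s * c := by
  have h : ∀ j, (a j - c) ^ 2 / c = (a j) ^ 2 / c - 2 * a j + c := by
    intro j; field_simp; ring
  simp only [h, Finset.sum_add_distrib, Finset.sum_sub_distrib, Finset.sum_div,
    ← Finset.mul_sum, Finset.sum_const, Finset.card_univ, Fintype.card_fin,
    nsmul_eq_mul]

theorem stmt6 {r s : ℕ} (N : Fin r → Fin s → ℝ)
    (hnn : ∀ i j, 0 ≤ N i j)
    (hn : 0 < ∑ i, ∑ j, N i j) :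
    funChisq N ≤ (∑ i, ∑ j, N i j) * s *
      (1 - ∑ j, ((∑ i, N i j) / (∑ i, ∑ j, N i j)) ^ 2) := by
  have hs : 0 < s := by
    rcases Nat.eq_zero_or_pos s with h | h
    · subst h; simp at hn
    · exact h
  have hsR : (0:ℝ) < s := by exact_mod_cast hs
  set n : ℝ := ∑ i, ∑ j, N i j with hn_def
  have hnne : n ≠ 0 := ne_of_gt hn
  have hrow : ∀ i, 0 ≤ ∑ j, N i j := fun i => Finset.sum_nonneg fun j _ => hnn i j
  -- bound each row term
  have hrowbound : ∀ i, (if (∑ j', N i j') = 0 then 0 else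
      ∑ j, (N i j - (∑ j', N i j') / s) ^ 2 / ((∑ j', N i j') / s))
      ≤ ((s:ℝ) - 1) * ∑ j, N i j := by
    intro i
    by_cases h : (∑ j', N i j') = 0
    · simp only [h, if_true, mul_zero]; simp
    · simp only [h, if_false]
      have hpos : 0 < ∑ j', N i j' := (hrow i).lt_of_ne (Ne.symm h)
      have hc : (∑ j', N i j') / s ≠ 0 := by positivity
      rw [expand_chisq _ _ hc]
      have hsq : ∑ j, (N i j) ^ 2 ≤ (∑ j', N i j') ^ 2 := by
        calc ∑ j, (N i j) ^ 2 ≤ ∑ j, N i j * (∑ j', N i j') := by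
              apply Finset.sum_le_sum; intro j _
              rw [sq]
              exact mul_le_mul_of_nonneg_left
                (Finset.single_le_sum (fun j' _ => hnn i j') (Finset.mem_univ j)) (hnn i j)
          _ = (∑ j', N i j') ^ 2 := by rw [← Finset.sum_mul, sq]
      have hdiv : (∑ j, (N i j) ^ 2) / ((∑ j', N i j') / s)
          ≤ ((∑ j', N i j') ^ 2) / ((∑ j', N i j') / s) := by
        gcongr
      have heq : ((∑ j', N i j') ^ 2) / ((∑ j', N i j') / s) = s * (∑ j', N i j') := by
        field_simp
      have hcan : (s:ℝ) * ((∑ j', N i j') / s) = ∑ j', N i j' := by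
        field_simp
      linarith [hdiv]
  -- sum up the row bounds
  have hfirst : (∑ i, if (∑ j', N i j') = 0 then 0 else
      ∑ j, (N i j - (∑ j', N i j') / s) ^ 2 / ((∑ j', N i j') / s))
      ≤ ((s:ℝ) - 1) * n := by
    calc (∑ i, if (∑ j', N i j') = 0 then 0 else
        ∑ j, (N i j - (∑ j', N i j') / s) ^ 2 / ((∑ j', N i j') / s))
        ≤ ∑ i, ((s:ℝ) - 1) * ∑ j, N i j :=
          Finset.sum_le_sum fun i _ => hrowbound i
      _ = ((s:ℝ) - 1) * n := by rw [← Finset.mul_sum]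
  -- second term exact value
  have hc2 : n / s ≠ 0 := by positivity
  have hcomm : (∑ j, ∑ i, N i j) = n := by rw [hn_def]; exact Finset.sum_comm
  have hsecond : ∑ j, ((∑ i, N i j) - (∑ i, ∑ j', N i j') / s) ^ 2
        / ((∑ i, ∑ j', N i j') / s)
      = (∑ j, (∑ i, N i j) ^ 2) / (n / s) - 2 * n + s * (n / s) := by
    have hrfl : (∑ i, ∑ j', N i j') = n := rfl
    rw [hrfl, expand_chisq (fun j => ∑ i, N i j) (n / s) hc2, hcomm]
  rw [funChisq, hsecond]
  have hrhs : n * s * (1 - ∑ j, ((∑ i, N i j) / n) ^ 2)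
      = ((s:ℝ) - 1) * n - ((∑ j, (∑ i, N i j) ^ 2) / (n / s) - 2 * n + s * (n / s)) := by
    have : ∑ j, ((∑ i, N i j) / n) ^ 2 = (∑ j, (∑ i, N i j) ^ 2) / n ^ 2 := by
      rw [Finset.sum_div]
      exact Finset.sum_congr rfl fun j _ => by rw [div_pow]
    rw [this]
    field_simp
    ring
  rw [hrhs]
  linarith [hfirst]
end

section
/- If in each row of the contingency table all mass is concentrated in a single column (i.e., Y is a function of X), then the functional chi-square statistic attains its upper bound: χ²(f:X→Y) = n·s·(1 − Σ_j q_j²), where q_j = n_{·j}/n. -/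
open Finset

theorem stmt7 {r s : ℕ} (N : Fin r → Fin s → ℝ)
    (hnn : ∀ i j, 0 ≤ N i j)
    (hn : 0 < ∑ i, ∑ j, N i j)
    (hfun : ∀ i, 0 < ∑ j', N i j' →
      ∃ j₀ : Fin s, N i j₀ = ∑ j', N i j' ∧ ∀ j ≠ j₀, N i j = 0) :
    funChisq N = (∑ i, ∑ j, N i j) * s *
      (1 - ∑ j, ((∑ i, N i j) / (∑ i, ∑ j, N i j)) ^ 2) := by
  have hs0 : s ≠ 0 := by rintro rfl; simp at hn
  have hs : (s : ℝ) ≠ 0 := Nat.cast_ne_zero.mpr hs0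
  set n : ℝ := ∑ i, ∑ j, N i j with hn_def
  have hne : n ≠ 0 := ne_of_gt hn
  have hrow : ∀ i, (if (∑ j', N i j') = 0 then (0:ℝ) else
      ∑ j, (N i j - (∑ j', N i j') / s) ^ 2 / ((∑ j', N i j') / s))
      = (∑ j', N i j') * ((s:ℝ) - 1) := by
    intro i
    by_cases h : (∑ j', N i j') = 0
    · simp [h]
    · have hpos : 0 < ∑ j', N i j' :=
        (Finset.sum_nonneg fun j _ => hnn i j).lt_of_ne (Ne.symm h)
      obtain ⟨j₀, hj₀, hz⟩ := hfun i hpos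
      rw [if_neg h, ← Finset.add_sum_erase _ _ (Finset.mem_univ j₀)]
      have h2 : ∀ j ∈ Finset.univ.erase j₀,
          (N i j - (∑ j', N i j') / s) ^ 2 / ((∑ j', N i j') / s)
          = (∑ j', N i j') / s := by
        intro j hj
        rw [hz j (Finset.mem_erase.mp hj).1]
        field_simp
        ring
      rw [Finset.sum_congr rfl h2, Finset.sum_const, hj₀,
        Finset.card_erase_of_mem (Finset.mem_univ j₀), Finset.card_univ,
        Fintype.card_fin]
      have hs1 : 1 ≤ s := Nat.one_le_iff_ne_zero.mpr hs0
      rw [nsmul_eq_mul, Nat.cast_sub hs1, Nat.cast_one]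
      field_simp
      ring
  rw [funChisq, Finset.sum_congr rfl (fun i _ => hrow i), ← Finset.sum_mul]
  have hcol : ∀ j : Fin s,
      ((∑ i, N i j) - n / s) ^ 2 / (n / s)
      = n * s * ((∑ i, N i j) / n) ^ 2 - 2 * (∑ i, N i j) + n / s := by
    intro j
    field_simp
    ring
  have hsum : ∑ j, ∑ i, N i j = n := by rw [Finset.sum_comm]
  have hns : (s:ℝ) * (n / s) = n := by field_simp
  rw [Finset.sum_congr rfl (fun j _ => hcol j), Finset.sum_add_distrib,
    Finset.sum_sub_distrib, ← Finset.mul_sum, ← Finset.mul_sum, hsum,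
    Finset.sum_const, Finset.card_univ, Fintype.card_fin, nsmul_eq_mul, hns]
  ring
end

section
/- The functional chi-square statistic χ²(f:X→Y) of any contingency table is nonnegative. -/
open Finset

lemma chisq_row_expand {s : ℕ} (hs : (0:ℝ) < s) (f : Fin s → ℝ) (m : ℝ) (hm : m ≠ 0) :
    ∑ j, (f j - m / s) ^ 2 / (m / s)
      = (∑ j, (f j) ^ 2) * s / m - 2 * (∑ j, f j) + m := by
  have h : ∀ j : Fin s, (f j - m / s) ^ 2 / (m / s)
      = (f j) ^ 2 * s / m - 2 * f j + m / s := by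
    intro j
    field_simp
    ring
  rw [Finset.sum_congr rfl (fun j _ => h j)]
  rw [Finset.sum_add_distrib, Finset.sum_sub_distrib, ← Finset.sum_div, ← Finset.sum_mul,
    ← Finset.mul_sum, Finset.sum_const, Finset.card_univ, Fintype.card_fin, nsmul_eq_mul]
  field_simp

theorem stmt12 {r s : ℕ} (N : Fin r → Fin s → ℝ)
    (hnn : ∀ i j, 0 ≤ N i j)
    (hn : 0 < ∑ i, ∑ j, N i j) :
    0 ≤ funChisq N := by
  have hs : 0 < s := by
    rcases Nat.eq_zero_or_pos s with h | h
    · subst h; simp at hn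
    · exact h
  have hsR : (0:ℝ) < s := by exact_mod_cast hs
  set n : Fin r → ℝ := fun i => ∑ j, N i j with hn_def
  set nn : ℝ := ∑ i, ∑ j, N i j with hnn_def
  have hni : ∀ i, 0 ≤ n i := fun i => Finset.sum_nonneg fun j _ => hnn i j
  have hzero : ∀ i, n i = 0 → ∀ j, N i j = 0 := by
    intro i hi j
    exact (Finset.sum_eq_zero_iff_of_nonneg (fun j _ => hnn i j)).mp hi j (mem_univ j)
  set T := Finset.univ.filter (fun i : Fin r => n i ≠ 0) with hT
  have htot : ∑ i ∈ T, n i = nn := by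
    rw [hT, Finset.sum_filter_ne_zero]
  have hcol : ∀ j, ∑ i ∈ T, N i j = ∑ i, N i j := by
    intro j
    apply Finset.sum_subset (Finset.subset_univ T)
    intro i _ hi
    rw [hT, Finset.mem_filter] at hi
    push_neg at hi
    exact hzero i (hi (mem_univ i)) j
  -- rewrite the first sum over T
  have hA : (∑ i, if (∑ j', N i j') = 0 then 0 else
      ∑ j, (N i j - (∑ j', N i j') / s) ^ 2 / ((∑ j', N i j') / s))
      = ∑ i ∈ T, ((∑ j, (N i j) ^ 2) * s / n i - n i) := by
    rw [hT, Finset.sum_filter]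
    apply Finset.sum_congr rfl
    intro i _
    by_cases hi : n i = 0
    · have hi' : (∑ j', N i j') = 0 := hi
      simp [hi', hi]
    · rw [if_neg (by simpa using hi), if_pos hi,
        chisq_row_expand hsR (fun j => N i j) (n i) hi]
      have h2 : (∑ j, N i j) = n i := rfl
      rw [h2]; ring
  have hB : (∑ j, ((∑ i, N i j) - nn / s) ^ 2 / (nn / s))
      = (∑ j, (∑ i, N i j) ^ 2) * s / nn - nn := by
    rw [chisq_row_expand hsR (fun j => ∑ i, N i j) nn hn.ne']
    have h2 : (∑ x : Fin s, ∑ y : Fin r, N y x) = nn := by rw [hnn_def, Finset.sum_comm]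
    rw [h2]; ring
  have hkey : ∀ j, (∑ i, N i j) ^ 2 / nn ≤ ∑ i ∈ T, (N i j) ^ 2 / n i := by
    intro j
    rw [← hcol j, ← htot]
    exact Finset.sq_sum_div_le_sum_sq_div T (fun i => N i j)
      (fun i hi => lt_of_le_of_ne (hni i) (Ne.symm (Finset.mem_filter.mp hi).2))
  have hmain : (∑ j, (∑ i, N i j) ^ 2) / nn ≤ ∑ i ∈ T, (∑ j, (N i j) ^ 2) / n i := by
    rw [Finset.sum_div]
    calc ∑ j, (∑ i, N i j) ^ 2 / nn ≤ ∑ j, ∑ i ∈ T, (N i j) ^ 2 / n i :=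
          Finset.sum_le_sum fun j _ => hkey j
      _ = ∑ i ∈ T, (∑ j, (N i j) ^ 2) / n i := by
          rw [Finset.sum_comm]
          exact Finset.sum_congr rfl fun i _ => by rw [Finset.sum_div]
  rw [funChisq, hA, ← hnn_def, hB]
  have hsum : ∑ i ∈ T, ((∑ j, (N i j) ^ 2) * s / n i - n i)
      = (∑ i ∈ T, (∑ j, (N i j) ^ 2) / n i) * s - nn := by
    rw [Finset.sum_sub_distrib, htot, Finset.sum_mul]
    congr 1
    exact Finset.sum_congr rfl fun i _ => by ring
  rw [hsum]
  have : (∑ j, (∑ i, N i j) ^ 2) * s / nn = ((∑ j, (∑ i, N i j) ^ 2) / nn) * s := by ring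
  rw [this]
  nlinarith [hmain, hsR]
end
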